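/- For g > 1 and m² = 1/(g-1), the function x ↦ (2√(1+m²)/(π m²))·√(m² - x²)/(1+x²)² on [-m, m] integrates to 1. -/

import Mathlib

/-!
The integrand `√(m² - x²) / (1 + x²)²` has the explicit odd primitive `gwPrimitive m`. At
`x = ±m` its algebraic term vanishes and its arcsin term takes the value `arcsin (±1) = ±π/2`,
so the integral over `[-m, m]` is `π m² / (2 √(1 + m²))`, the reciprocal of the normalising
constant.
-/

open Real

-- In the variable `θ = arctan x`, the argument of `arcsin` is `√(1 + m²) / m * sin θ`.
noncomputable def gwPrimitive (m x : ℝ) : ℝ :=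
  x * √(m ^ 2 - x ^ 2) / (2 * (1 + x ^ 2)) +
    m ^ 2 / (2 * √(1 + m ^ 2)) * arcsin (√(1 + m ^ 2) / m * (x / √(1 + x ^ 2)))

lemma hasDerivAt_mul_sqrt_sub_sq_div {m x : ℝ} (hx : x ^ 2 < m ^ 2) :
    HasDerivAt (fun y => y * √(m ^ 2 - y ^ 2) / (2 * (1 + y ^ 2)))
      ((m ^ 2 - 2 * x ^ 2 - m ^ 2 * x ^ 2) / (2 * √(m ^ 2 - x ^ 2) * (1 + x ^ 2) ^ 2)) x := by
  have hpos : 0 < m ^ 2 - x ^ 2 := by linarith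
  have hsqrt : HasDerivAt (fun y => √(m ^ 2 - y ^ 2)) (-(2 * x) / (2 * √(m ^ 2 - x ^ 2))) x := by
    simpa using ((hasDerivAt_pow 2 x).const_sub (m ^ 2)).sqrt hpos.ne'
  have hden : HasDerivAt (fun y : ℝ => 2 * (1 + y ^ 2)) (2 * (2 * x)) x := by
    simpa using ((hasDerivAt_pow 2 x).const_add 1).const_mul 2
  have hnum : HasDerivAt (fun y => y * √(m ^ 2 - y ^ 2))
      (1 * √(m ^ 2 - x ^ 2) + x * (-(2 * x) / (2 * √(m ^ 2 - x ^ 2)))) x :=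
    (hasDerivAt_id' x).mul hsqrt
  refine (hnum.div hden (by positivity)).congr_deriv ?_
  field_simp
  rw [sq_sqrt hpos.le]
  ring

lemma hasDerivAt_arcsin_mul_div_sqrt_one_add_sq {m x : ℝ} (hm : 0 < m) (hx : x ^ 2 < m ^ 2) :
    HasDerivAt (fun y => arcsin (√(1 + m ^ 2) / m * (y / √(1 + y ^ 2))))
      (√(1 + m ^ 2) / ((1 + x ^ 2) * √(m ^ 2 - x ^ 2))) x := by
  have hpos : 0 < m ^ 2 - x ^ 2 := by linarith
  have ht : 0 < √(1 + x ^ 2) := sqrt_pos.2 (by positivity)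
  have ht2 : √(1 + x ^ 2) ^ 2 = 1 + x ^ 2 := sq_sqrt (by positivity)
  have hk2 : √(1 + m ^ 2) ^ 2 = 1 + m ^ 2 := sq_sqrt (by positivity)
  set u := √(1 + m ^ 2) / m * (x / √(1 + x ^ 2))
  have h1u : 1 - u ^ 2 = (√(m ^ 2 - x ^ 2) / (m * √(1 + x ^ 2))) ^ 2 := by
    simp only [u, div_pow, mul_pow, hk2, ht2, sq_sqrt hpos.le]
    field_simp
    ring
  have hu : u ^ 2 < 1 := by
    have : 0 < 1 - u ^ 2 := by rw [h1u]; positivity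
    linarith
  have hsqrt : HasDerivAt (fun y => √(1 + y ^ 2)) (2 * x / (2 * √(1 + x ^ 2))) x := by
    simpa using ((hasDerivAt_pow 2 x).const_add 1).sqrt (by positivity)
  have hinner := ((hasDerivAt_id' x).div hsqrt ht.ne').const_mul (√(1 + m ^ 2) / m)
  have harcsin := hasDerivAt_arcsin (x := u) (by nlinarith) (by nlinarith)
  refine (harcsin.comp x hinner).congr_deriv ?_
  rw [h1u, sqrt_sq (by positivity)]
  field_simp
  rw [ht2]
  ring

lemma hasDerivAt_gwPrimitive {m x : ℝ} (hm : 0 < m) (hx : x ^ 2 < m ^ 2) :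
    HasDerivAt (gwPrimitive m) (√(m ^ 2 - x ^ 2) / (1 + x ^ 2) ^ 2) x := by
  have hpos : 0 < m ^ 2 - x ^ 2 := by linarith
  refine ((hasDerivAt_mul_sqrt_sub_sq_div hx).add
    ((hasDerivAt_arcsin_mul_div_sqrt_one_add_sq hm hx).const_mul _)).congr_deriv ?_
  field_simp
  rw [sq_sqrt hpos.le]
  ring

lemma continuous_gwPrimitive (m : ℝ) : Continuous (gwPrimitive m) := by
  unfold gwPrimitive
  fun_prop (disch := intro x; positivity)

lemma gwPrimitive_neg (m x : ℝ) : gwPrimitive m (-x) = -gwPrimitive m x := by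
  simp only [gwPrimitive, neg_sq, mul_neg, neg_mul, neg_div, arcsin_neg]
  ring

lemma gwPrimitive_self {m : ℝ} (hm : 0 < m) :
    gwPrimitive m m = π * m ^ 2 / (4 * √(1 + m ^ 2)) := by
  have h1 : √(1 + m ^ 2) / m * (m / √(1 + m ^ 2)) = 1 := by field_simp
  rw [gwPrimitive, sub_self, sqrt_zero, h1, arcsin_one]
  field_simp
  ring

theorem integral_sqrt_sub_sq_div_one_add_sq_sq {m : ℝ} (hm : 0 < m) :
    ∫ x in -m..m, √(m ^ 2 - x ^ 2) / (1 + x ^ 2) ^ 2 = π * m ^ 2 / (2 * √(1 + m ^ 2)) := by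
  have hderiv : ∀ x ∈ Set.Ioo (-m) m,
      HasDerivAt (gwPrimitive m) (√(m ^ 2 - x ^ 2) / (1 + x ^ 2) ^ 2) x :=
    fun x hx => hasDerivAt_gwPrimitive hm (sq_lt_sq' hx.1 hx.2)
  have hint : IntervalIntegrable (fun x => √(m ^ 2 - x ^ 2) / (1 + x ^ 2) ^ 2)
      MeasureTheory.volume (-m) m :=
    (Continuous.div (by fun_prop) (by fun_prop) fun x => by positivity).intervalIntegrable _ _
  rw [intervalIntegral.integral_eq_sub_of_hasDerivAt_of_le (by linarith)
    (continuous_gwPrimitive m).continuousOn hderiv hint, gwPrimitive_neg, gwPrimitive_self hm]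
  ring

theorem GW_pushforward_gapped_is_probability (m : ℝ) (hm : 0 < m) :
    ∫ x in (-m)..m,
        (2 * Real.sqrt (1 + m ^ 2) / (Real.pi * m ^ 2))
          * Real.sqrt (m ^ 2 - x ^ 2) / (1 + x ^ 2) ^ 2 = 1 := by
  simp_rw [mul_div_assoc]
  rw [intervalIntegral.integral_const_mul, integral_sqrt_sub_sq_div_one_add_sq_sq hm]
  field_simp
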